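/- Let W ∈ ℝ^{d×r}, W* ∈ ℝ^{d×r}, let R be an orthogonal matrix minimizing ‖W − W*Z‖_F over orthogonal Z, and set Δ = W − W*R, N = WW^T, N* = W*(W*)^T. Suppose H is a symmetric bilinear form on symmetric d×d matrices satisfying (1−δ)‖X‖_F² ≤ X : H : X ≤ (1+δ)‖X‖_F² for all matrices X of rank at most 2r, with δ = 1/10. If ‖Δ‖_F² ≤ σ_r(N*)/40, then ΔΔ^T : H : ΔΔ^T ≤ (1+δ)·2‖N − N*‖_F², and moreover ΔΔ^T : H : ΔΔ^T − 3(N − N*) : H : (N − N*) ≤ −(1−5δ)‖N − N*‖_F². -/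

import Mathlib

/-!
Put `A = W* R`, so that `AAᵀ = N*` and `Δ = W - A`. Comparing `R` with `R Q` for Givens rotations
and Householder reflections `Q` shows that `C = WᵀA` is symmetric positive semidefinite. For such
an aligned pair, `2‖WWᵀ - AAᵀ‖² = ‖ΔΔᵀ‖² + ‖WᵀW - AᵀA‖² + 4 tr(Δ C Δᵀ)`, whence
`‖ΔΔᵀ‖² ≤ 2‖N - N*‖²`. Both `ΔΔᵀ` and `N - N* = [W A][W -A]ᵀ` have rank at most `2r`, and the
restricted isometry bounds turn this into the two inequalities.
-/

open Matrix BigOperators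

noncomputable section

/-- Squared Frobenius norm of a real matrix. -/
def frobSq {m n : Type*} [Fintype m] [Fintype n] (A : Matrix m n ℝ) : ℝ :=
  ∑ i, ∑ j, (A i j) ^ 2

section Frobenius

variable {m n : Type*} [Fintype m] [Fintype n]

theorem frobSq_eq_trace (A : Matrix m n ℝ) : frobSq A = trace (Aᵀ * A) := by
  simp only [frobSq, trace, diag, mul_apply, transpose_apply, sq]
  exact Finset.sum_comm

theorem frobSq_nonneg (A : Matrix m n ℝ) : 0 ≤ frobSq A := by
  unfold frobSq
  positivity

theorem frobSq_eq_trace_mul_self {A : Matrix n n ℝ} (hA : A.IsSymm) :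
    frobSq A = trace (A * A) := by
  rw [frobSq_eq_trace, hA.eq]

theorem frobSq_sub (A B : Matrix m n ℝ) :
    frobSq (A - B) = frobSq A + frobSq B - 2 * trace (Aᵀ * B) := by
  have hBA : trace (Bᵀ * A) = trace (Aᵀ * B) := by
    rw [← trace_transpose, transpose_mul, transpose_transpose]
  simp only [frobSq_eq_trace, transpose_sub, Matrix.sub_mul, Matrix.mul_sub, trace_sub, hBA]
  ring

theorem frobSq_mul_of_mem_orthogonalGroup [DecidableEq n] (A : Matrix m n ℝ) {Z : Matrix n n ℝ}
    (hZ : Z ∈ orthogonalGroup n ℝ) : frobSq (A * Z) = frobSq A := by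
  rw [frobSq_eq_trace, frobSq_eq_trace, transpose_mul, Matrix.mul_assoc, trace_mul_comm,
    Matrix.mul_assoc, Matrix.mul_assoc, (mem_orthogonalGroup_iff n ℝ).1 hZ, Matrix.mul_one]

end Frobenius

section OrthogonalOrbit

variable {n : Type*} [Fintype n] [DecidableEq n]

def givensRotation (i j : n) (c s : ℝ) : Matrix n n ℝ :=
  1 + single i i (c - 1) + single j j (c - 1) + single j i s - single i j s

theorem givensRotation_mem_orthogonalGroup {i j : n} (hij : i ≠ j) {c s : ℝ}
    (h : c ^ 2 + s ^ 2 = 1) : givensRotation i j c s ∈ orthogonalGroup n ℝ := by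
  rw [mem_orthogonalGroup_iff]
  simp only [givensRotation, transpose_add, transpose_sub, transpose_one, transpose_single,
    add_mul, mul_add, sub_mul, mul_sub, one_mul, mul_one, single_mul_single_same,
    single_mul_single_of_ne, ne_eq, hij, Ne.symm hij, not_false_eq_true, sub_zero, add_zero]
  ext a b
  simp only [Matrix.add_apply, Matrix.sub_apply, one_apply, single_apply]
  split_ifs <;> grind

theorem trace_mul_givensRotation (C : Matrix n n ℝ) (i j : n) (c s : ℝ) :
    trace (C * givensRotation i j c s) =
      trace C + (c - 1) * (C i i + C j j) + s * (C i j - C j i) := by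
  simp only [givensRotation, Matrix.mul_add, Matrix.mul_sub, Matrix.mul_one, trace_add, trace_sub,
    trace_mul_single, MulOpposite.smul_eq_mul_unop, MulOpposite.unop_op]
  ring

-- `householder 0 = 1`, since `2 / 0 = 0`.
def householder (v : n → ℝ) : Matrix n n ℝ :=
  1 - (2 / (v ⬝ᵥ v)) • vecMulVec v v

theorem householder_mem_orthogonalGroup (v : n → ℝ) : householder v ∈ orthogonalGroup n ℝ := by
  have hcoef : 2 / (v ⬝ᵥ v) * (2 / (v ⬝ᵥ v) * (v ⬝ᵥ v)) = 2 / (v ⬝ᵥ v) + 2 / (v ⬝ᵥ v) := by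
    rcases eq_or_ne (v ⬝ᵥ v) 0 with hv | hv
    · simp [hv]
    · field_simp
      ring
  have hsq : vecMulVec v v * vecMulVec v v = (v ⬝ᵥ v) • vecMulVec v v := by
    rw [vecMulVec_mul_vecMulVec, vecMulVec_smul]
  rw [mem_orthogonalGroup_iff, householder, transpose_sub, transpose_smul, transpose_one,
    transpose_vecMulVec]
  simp only [Matrix.sub_mul, Matrix.mul_sub, Matrix.one_mul, Matrix.mul_one, Matrix.smul_mul,
    Matrix.mul_smul, hsq, smul_smul]
  linear_combination (norm := module) hcoef • vecMulVec v v

theorem trace_mul_householder (C : Matrix n n ℝ) (v : n → ℝ) :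
    trace (C * householder v) = trace C - 2 / (v ⬝ᵥ v) * (v ⬝ᵥ C *ᵥ v) := by
  rw [householder, Matrix.mul_sub, Matrix.mul_one, Matrix.mul_smul, trace_sub, trace_smul,
    mul_vecMulVec, trace_vecMulVec, smul_eq_mul, dotProduct_comm (C *ᵥ v)]

variable {C : Matrix n n ℝ}

theorem isSymm_of_forall_trace_mul_le (hC : ∀ Q ∈ orthogonalGroup n ℝ, trace (C * Q) ≤ trace C) :
    C.IsSymm := by
  refine IsSymm.ext fun j i => ?_
  rcases eq_or_ne i j with rfl | hij
  · rfl
  -- rotate by the argument of `z`, which maximises `c * z.re + s * z.im` over the unit circle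
  set z : ℂ := ⟨C i i + C j j, C i j - C j i⟩
  have hrot := hC _ (givensRotation_mem_orthogonalGroup hij (Real.cos_sq_add_sin_sq z.arg))
  rw [trace_mul_givensRotation] at hrot
  have hre := Complex.norm_mul_cos_arg z
  have him := Complex.norm_mul_sin_arg z
  have hsq : ‖z‖ ^ 2 = z.re ^ 2 + z.im ^ 2 := by
    rw [Complex.sq_norm, Complex.normSq_apply]
    ring
  have hz : z.im = 0 := by
    nlinarith [norm_nonneg z, Complex.re_le_norm z, sq_nonneg z.im]
  simp only [z] at hz
  linarith

theorem posSemidef_of_forall_trace_mul_le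
    (hC : ∀ Q ∈ orthogonalGroup n ℝ, trace (C * Q) ≤ trace C) : C.PosSemidef := by
  refine PosSemidef.of_dotProduct_mulVec_nonneg
    (isHermitian_iff_isSymm.2 (isSymm_of_forall_trace_mul_le hC)) fun v => ?_
  rw [star_trivial]
  have href := hC _ (householder_mem_orthogonalGroup v)
  rw [trace_mul_householder] at href
  rcases eq_or_ne v 0 with rfl | hv
  · simp
  have hvv : 0 < v ⬝ᵥ v := by simpa using dotProduct_star_self_pos_iff.2 hv
  exact nonneg_of_mul_nonneg_right (by linarith) (by positivity : 0 < 2 / (v ⬝ᵥ v))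

end OrthogonalOrbit

section Alignment

variable {m n : Type*} [Fintype m] [Fintype n]

theorem trace_mul_le_of_isMinOn [DecidableEq n] {W V : Matrix m n ℝ} {R : Matrix n n ℝ}
    (hR : R ∈ orthogonalGroup n ℝ)
    (hmin : IsMinOn (fun Z => frobSq (W - V * Z)) (orthogonalGroup n ℝ) R)
    {Q : Matrix n n ℝ} (hQ : Q ∈ orthogonalGroup n ℝ) :
    trace (Wᵀ * (V * R) * Q) ≤ trace (Wᵀ * (V * R)) := by
  have h := isMinOn_iff.1 hmin (R * Q) (Submonoid.mul_mem _ hR hQ)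
  simp only [frobSq_sub, frobSq_mul_of_mem_orthogonalGroup V hR,
    frobSq_mul_of_mem_orthogonalGroup V (Submonoid.mul_mem _ hR hQ)] at h
  simpa only [Matrix.mul_assoc, mul_le_mul_iff_right₀ two_pos, sub_le_sub_iff_left] using h

theorem posSemidef_transpose_mul_of_isMinOn [DecidableEq n] {W V : Matrix m n ℝ}
    {R : Matrix n n ℝ} (hR : R ∈ orthogonalGroup n ℝ)
    (hmin : IsMinOn (fun Z => frobSq (W - V * Z)) (orthogonalGroup n ℝ) R) :
    (Wᵀ * (V * R)).PosSemidef :=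
  posSemidef_of_forall_trace_mul_le fun _ hQ => trace_mul_le_of_isMinOn hR hmin hQ

theorem trace_mul_transpose_mul_mul_transpose (U V Y Z : Matrix m n ℝ) :
    trace (U * Vᵀ * (Y * Zᵀ)) = trace (Vᵀ * Y * (Zᵀ * U)) := by
  rw [Matrix.mul_assoc, trace_mul_comm]
  simp only [Matrix.mul_assoc]

theorem two_mul_frobSq_mul_transpose_sub_eq {W A : Matrix m n ℝ} (h : (Wᵀ * A).IsSymm) :
    2 * frobSq (W * Wᵀ - A * Aᵀ) = frobSq ((W - A) * (W - A)ᵀ) + frobSq (Wᵀ * W - Aᵀ * A)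
      + 4 * trace ((W - A) * (Wᵀ * A) * (W - A)ᵀ) := by
  have hE : (W * Wᵀ - A * Aᵀ).IsSymm := by
    simp only [IsSymm, transpose_sub, transpose_mul, transpose_transpose]
  have hD : ((W - A) * (W - A)ᵀ).IsSymm := by
    simp only [IsSymm, transpose_mul, transpose_transpose]
  have hG : (Wᵀ * W - Aᵀ * A).IsSymm := by
    simp only [IsSymm, transpose_sub, transpose_mul, transpose_transpose]
  rw [frobSq_eq_trace_mul_self hE, frobSq_eq_trace_mul_self hD, frobSq_eq_trace_mul_self hG,
    trace_mul_transpose_mul_mul_transpose, trace_mul_cycle (W - A) (Wᵀ * A)]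
  set X := Wᵀ * A
  set P := Wᵀ * W
  set Q := Aᵀ * A
  have hX : Aᵀ * W = X := by rw [← h.eq, transpose_mul, transpose_transpose]
  have hM : (W - A)ᵀ * (W - A) = P - X - X + Q := by
    simp only [transpose_sub, Matrix.sub_mul, Matrix.mul_sub, hX]
    abel
  have hE2 : trace ((W * Wᵀ - A * Aᵀ) * (W * Wᵀ - A * Aᵀ)) =
      trace (P * P) - 2 * trace (X * X) + trace (Q * Q) := by
    simp only [Matrix.sub_mul, Matrix.mul_sub, trace_sub, trace_mul_transpose_mul_mul_transpose,
      hX]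
    ring
  rw [hE2, hM]
  simp only [Matrix.sub_mul, Matrix.mul_sub, Matrix.add_mul, Matrix.mul_add, trace_sub, trace_add]
  rw [trace_mul_comm X P, trace_mul_comm X Q, trace_mul_comm Q P]
  ring

theorem frobSq_sub_mul_transpose_sub_le {W A : Matrix m n ℝ} (h : (Wᵀ * A).PosSemidef) :
    frobSq ((W - A) * (W - A)ᵀ) ≤ 2 * frobSq (W * Wᵀ - A * Aᵀ) := by
  have htr : 0 ≤ trace ((W - A) * (Wᵀ * A) * (W - A)ᵀ) := by
    simpa only [conjTranspose_eq_transpose_of_trivial] using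
      (h.mul_mul_conjTranspose_same (W - A)).trace_nonneg
  rw [two_mul_frobSq_mul_transpose_sub_eq (isHermitian_iff_isSymm.1 h.isHermitian)]
  linarith [frobSq_nonneg (Wᵀ * W - Aᵀ * A)]

end Alignment

theorem rank_mul_sub_mul_le {m n k R : Type*} [Fintype m] [Fintype n] [Fintype k]
    [CommRing R] [StrongRankCondition R] (U : Matrix m n R) (V : Matrix n m R)
    (Y : Matrix m k R) (Z : Matrix k m R) :
    (U * V - Y * Z).rank ≤ Fintype.card n + Fintype.card k := by
  rw [sub_eq_add_neg, ← Matrix.mul_neg, ← fromCols_mul_fromRows, ← Fintype.card_sum]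
  exact (rank_mul_le_left _ _).trans (rank_le_card_width _)

theorem stmt14_general {d r : ℕ}
    (Hf : Matrix (Fin d) (Fin d) ℝ →ₗ[ℝ] Matrix (Fin d) (Fin d) ℝ →ₗ[ℝ] ℝ)
    (hRIP : ∀ X : Matrix (Fin d) (Fin d) ℝ, X.rank ≤ 2 * r →
      (1 - 1 / 10) * frobSq X ≤ Hf X X ∧ Hf X X ≤ (1 + 1 / 10) * frobSq X)
    (W Wstar : Matrix (Fin d) (Fin r) ℝ)
    (R : Matrix (Fin r) (Fin r) ℝ) (hR : R ∈ Matrix.orthogonalGroup (Fin r) ℝ)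
    (hmin : ∀ Z ∈ Matrix.orthogonalGroup (Fin r) ℝ,
      frobSq (W - Wstar * R) ≤ frobSq (W - Wstar * Z)) :
    Hf ((W - Wstar * R) * (W - Wstar * R)ᵀ) ((W - Wstar * R) * (W - Wstar * R)ᵀ) ≤
        (1 + 1 / 10) * (2 * frobSq (W * Wᵀ - Wstar * Wstarᵀ)) ∧
      Hf ((W - Wstar * R) * (W - Wstar * R)ᵀ) ((W - Wstar * R) * (W - Wstar * R)ᵀ) -
          3 * Hf (W * Wᵀ - Wstar * Wstarᵀ) (W * Wᵀ - Wstar * Wstarᵀ) ≤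
        -(1 - 5 * (1 / 10)) * frobSq (W * Wᵀ - Wstar * Wstarᵀ) := by
  have hgram : Wstar * R * (Wstar * R)ᵀ = Wstar * Wstarᵀ := by
    rw [transpose_mul, Matrix.mul_assoc, ← Matrix.mul_assoc R, (mem_orthogonalGroup_iff _ _).1 hR,
      Matrix.one_mul]
  have halign : frobSq ((W - Wstar * R) * (W - Wstar * R)ᵀ) ≤
      2 * frobSq (W * Wᵀ - Wstar * Wstarᵀ) := by
    simpa only [hgram] using frobSq_sub_mul_transpose_sub_le
      (posSemidef_transpose_mul_of_isMinOn hR (isMinOn_iff.2 hmin))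
  have hrank_err : ((W - Wstar * R) * (W - Wstar * R)ᵀ).rank ≤ 2 * r := by
    exact ((rank_mul_le_left _ _).trans (rank_le_width _)).trans (by omega)
  have hrank_gram : (W * Wᵀ - Wstar * Wstarᵀ).rank ≤ 2 * r := by
    simpa only [Fintype.card_fin, two_mul] using rank_mul_sub_mul_le W Wᵀ Wstar Wstarᵀ
  obtain ⟨-, h_err⟩ := hRIP _ hrank_err
  obtain ⟨h_gram, -⟩ := hRIP _ hrank_gram
  constructor <;> linarith

/-- Local regime of the unified analysis: with `R` the optimal orthogonal alignment of
`W` to `W*`, `Δ = W − W*R`, `N = WWᵀ`, `N* = W*(W*)ᵀ`, and a symmetric bilinear form `H`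
that is a `(2r, δ)`-restricted isometry with `δ = 1/10`, if `‖Δ‖_F² ≤ σ_r(N*)/40`
(`σr` being a lower bound on the eigenvalues of `(W*)ᵀW*`, i.e. on `σ_r(N*)`), then
`ΔΔᵀ:H:ΔΔᵀ ≤ (1+δ)·2‖N−N*‖_F²` and
`ΔΔᵀ:H:ΔΔᵀ − 3(N−N*):H:(N−N*) ≤ −(1−5δ)‖N−N*‖_F²`. -/
theorem stmt14 {d r : ℕ}
    (Hf : Matrix (Fin d) (Fin d) ℝ →ₗ[ℝ] Matrix (Fin d) (Fin d) ℝ →ₗ[ℝ] ℝ)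
    (hHsymm : ∀ X Y, Hf X Y = Hf Y X)
    (hRIP : ∀ X : Matrix (Fin d) (Fin d) ℝ, X.rank ≤ 2 * r →
      (1 - 1 / 10) * frobSq X ≤ Hf X X ∧ Hf X X ≤ (1 + 1 / 10) * frobSq X)
    (W Wstar : Matrix (Fin d) (Fin r) ℝ)
    (R : Matrix (Fin r) (Fin r) ℝ) (hR : R ∈ Matrix.orthogonalGroup (Fin r) ℝ)
    (hmin : ∀ Z ∈ Matrix.orthogonalGroup (Fin r) ℝ,
      frobSq (W - Wstar * R) ≤ frobSq (W - Wstar * Z))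
    (σr : ℝ)
    (hσ : ∀ x : Fin r → ℝ, σr * (∑ i, x i ^ 2) ≤ x ⬝ᵥ (Wstarᵀ * Wstar).mulVec x)
    (hΔ : frobSq (W - Wstar * R) ≤ σr / 40) :
    Hf ((W - Wstar * R) * (W - Wstar * R)ᵀ) ((W - Wstar * R) * (W - Wstar * R)ᵀ) ≤
        (1 + 1 / 10) * (2 * frobSq (W * Wᵀ - Wstar * Wstarᵀ)) ∧
      Hf ((W - Wstar * R) * (W - Wstar * R)ᵀ) ((W - Wstar * R) * (W - Wstar * R)ᵀ) -
          3 * Hf (W * Wᵀ - Wstar * Wstarᵀ) (W * Wᵀ - Wstar * Wstarᵀ) ≤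
        -(1 - 5 * (1 / 10)) * frobSq (W * Wᵀ - Wstar * Wstarᵀ) :=
  stmt14_general Hf hRIP W Wstar R hR hmin

end
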